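/- arXiv:2110.08876 — 4 statements merged into one kernel-verified Lean document; each statement's English description precedes it below -/
import Mathlib

section
/- Let s ≥ 2 and n_0 ≥ 1 be integers. For each j ∈ [s] let A_j be a finite set partitioned into nonempty blocks T_{1,j}, …, T_{n_0,j} with |T_{i,j}| = t_{i,j}. Then the number of MultiTree-inducing matchings M ⊆ A_1 × ⋯ × A_s equals (n_0!)^{s-1} · ∏_{i=1}^{n_0} ∏_{j=1}^{s} t_{i,j}. -/
/-- `M` is a MultiTree-inducing matching for the block system `T`:
`M` is a set of `n₀` tuples in `A₁ × ⋯ × A_s` (where `A_j = ⋃ i, T i j`), and for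
every coordinate `j` and every block index `i` exactly one element of `M` has its
`j`-th coordinate in the block `T i j`. -/
def IsMTIM {α : Type*} [DecidableEq α] {s n₀ : ℕ}
    (T : Fin n₀ → Fin s → Finset α) (M : Finset (Fin s → α)) : Prop :=
  M.card = n₀ ∧
    (∀ x ∈ M, ∀ j : Fin s, ∃ i : Fin n₀, x j ∈ T i j) ∧
    ∀ j : Fin s, ∀ i : Fin n₀, ∃! x, x ∈ M ∧ x j ∈ T i j

/-!
Label the `n₀` tuples of a MultiTree-inducing matching by the block containing their
coordinate `0`. For every other coordinate `j`, sending a tuple's label to the block of its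
`j`-th coordinate is then a permutation `σ j` of the block indices, and the matching is
determined by these `s - 1` permutations together with the choice, for each label `i` and
coordinate `j`, of an element of the block `T (σ j i) j`. Summing over the `(n₀!)^(s-1)`
choices of permutations, each contributes `∏_{i,j} |T i j|` matchings.
-/

theorem eq_of_mem_of_pairwise_disjoint {ι α : Type*} {T : ι → Finset α}
    (hT : ∀ i i', i ≠ i' → Disjoint (T i) (T i')) {i i' : ι} {a : α}
    (h : a ∈ T i) (h' : a ∈ T i') : i = i' := by
  by_contra hne
  exact Finset.disjoint_left.mp (hT i i' hne) h h'

theorem Fintype.prod_prod_perm_apply {ι κ M : Type*} [Fintype ι] [Fintype κ] [CommMonoid M]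
    (σ : κ → Equiv.Perm ι) (f : ι → κ → M) :
    ∏ i, ∏ j, f (σ j i) j = ∏ i, ∏ j, f i j := by
  rw [Finset.prod_comm, Finset.prod_comm (f := f)]
  exact Finset.prod_congr rfl fun j _ => Equiv.prod_comp (σ j) (f · j)

namespace IsMTIM

open Matrix (vecCons)

variable {α : Type*} {s n : ℕ} (T : Fin n → Fin (s + 1) → Finset α)

/-- `σ j` is the block permutation at coordinate `j.succ`; the one at coordinate `0` is
normalised to the identity. -/
abbrev Param : Type _ :=
  Σ σ : Fin s → Equiv.Perm (Fin n), ∀ i j, {a : α // a ∈ T (vecCons 1 σ j i) j}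

variable {T}

theorem Param.mem_zero (p : Param T) (i : Fin n) : (p.2 i 0 : α) ∈ T i 0 := by
  simpa using (p.2 i 0).2

theorem card_param :
    Fintype.card (Param T) = n.factorial ^ s * ∏ i, ∏ j, (T i j).card := by
  calc Fintype.card (Param T)
      = ∑ σ : Fin s → Equiv.Perm (Fin n), ∏ i, ∏ j, (T (vecCons 1 σ j i) j).card := by
        simp only [Fintype.card_sigma, Fintype.card_pi, Fintype.card_coe]
    _ = ∑ _σ : Fin s → Equiv.Perm (Fin n), ∏ i, ∏ j, (T i j).card :=
        Finset.sum_congr rfl fun σ _ => Fintype.prod_prod_perm_apply _ fun i j => (T i j).card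
    _ = n.factorial ^ s * ∏ i, ∏ j, (T i j).card := by
        simp [Fintype.card_perm]

theorem Param.tuple_injective
    (hdisj : ∀ j i i', i ≠ i' → Disjoint (T i j) (T i' j)) (p : Param T) :
    Function.Injective fun i j => (p.2 i j : α) := fun i i' h => by
  have h0 : (p.2 i 0 : α) = p.2 i' 0 := congrFun h 0
  exact eq_of_mem_of_pairwise_disjoint (hdisj 0) (p.mem_zero i) (h0 ▸ p.mem_zero i')

variable [DecidableEq α]

def Param.toFinset (p : Param T) : Finset (Fin (s + 1) → α) :=
  Finset.univ.image fun i j => (p.2 i j : α)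

theorem Param.isMTIM_toFinset
    (hdisj : ∀ j i i', i ≠ i' → Disjoint (T i j) (T i' j)) (p : Param T) :
    IsMTIM T p.toFinset := by
  obtain ⟨σ, a⟩ := p
  refine ⟨?_, ?_, fun j i => ?_⟩
  · rw [Param.toFinset, Finset.card_image_of_injective _ (tuple_injective hdisj _),
      Finset.card_univ, Fintype.card_fin]
  · rintro x hx j
    obtain ⟨i, -, rfl⟩ := Finset.mem_image.mp hx
    exact ⟨_, (a i j).2⟩
  · set k := (vecCons 1 σ j).symm i
    have hk : vecCons 1 σ j k = i := by simp [k]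
    refine ⟨fun j' => (a k j' : α), ⟨Finset.mem_image_of_mem _ (Finset.mem_univ k),
      hk ▸ (a k j).2⟩, ?_⟩
    rintro y ⟨hy, hyT⟩
    obtain ⟨i', -, rfl⟩ := Finset.mem_image.mp hy
    have : vecCons 1 σ j i' = i := eq_of_mem_of_pairwise_disjoint (hdisj _) (a i' j).2 hyT
    rw [show i' = k by simp [k, ← this]]

theorem Param.toFinset_injective (hdisj : ∀ j i i', i ≠ i' → Disjoint (T i j) (T i' j)) :
    Function.Injective (Param.toFinset (T := T)) := by
  rintro ⟨σ, a⟩ ⟨τ, b⟩ h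
  have hab : ∀ i j, (a i j : α) = b i j := by
    intro i j
    have hi : (fun j => (a i j : α)) ∈ Param.toFinset ⟨τ, b⟩ :=
      h ▸ Finset.mem_image_of_mem _ (Finset.mem_univ i)
    obtain ⟨i', -, hi'⟩ := Finset.mem_image.mp hi
    have hi'0 : (b i' 0 : α) = a i 0 := congrFun hi' 0
    obtain rfl : i' = i := eq_of_mem_of_pairwise_disjoint (hdisj 0) (Param.mem_zero ⟨τ, b⟩ i')
      (hi'0 ▸ Param.mem_zero ⟨σ, a⟩ i)
    exact (congrFun hi' j).symm
  obtain rfl : σ = τ := funext fun j => Equiv.ext fun i =>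
    eq_of_mem_of_pairwise_disjoint (hdisj _) (a i j.succ).2 (hab i j.succ ▸ (b i j.succ).2)
  obtain rfl : a = b := funext fun i => funext fun j => Subtype.ext (hab i j)
  rfl

theorem exists_toFinset_eq (hdisj : ∀ j i i', i ≠ i' → Disjoint (T i j) (T i' j))
    {M : Finset (Fin (s + 1) → α)} (hM : IsMTIM T M) :
    ∃ p : Param T, p.toFinset = M := by
  obtain ⟨hcard, hmem, huniq⟩ := hM
  choose f hfM hfT using fun i => (huniq 0 i).exists
  choose g hg using fun i j => hmem (f i) (hfM i) j
  have hf : Function.Injective f := fun i i' h =>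
    eq_of_mem_of_pairwise_disjoint (hdisj _) (hfT i) (h ▸ hfT i')
  have hg_bij : ∀ j, Function.Bijective (g · j) := fun j =>
    Finite.injective_iff_bijective.mp fun i i' h =>
      hf <| (huniq j (g i' j)).unique ⟨hfM i, h ▸ hg i j⟩ ⟨hfM i', hg i' j⟩
  let σ : Fin s → Equiv.Perm (Fin n) := fun j => .ofBijective _ (hg_bij j.succ)
  have hσ : ∀ i j, vecCons 1 σ j i = g i j := fun i j => by
    refine Fin.cases ?_ (fun j => ?_) j
    · exact eq_of_mem_of_pairwise_disjoint (hdisj _) (hfT i) (hg i 0)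
    · simp [σ]
  refine ⟨⟨σ, fun i j => ⟨f i j, hσ i j ▸ hg i j⟩⟩, ?_⟩
  refine Finset.eq_of_subset_of_card_le ?_ ?_
  · simp only [Param.toFinset, Finset.image_subset_iff]
    exact fun i _ => hfM i
  · rw [hcard, Param.toFinset, Finset.card_image_of_injective _ hf, Finset.card_univ,
      Fintype.card_fin]

theorem card_eq_card_param (hdisj : ∀ j i i', i ≠ i' → Disjoint (T i j) (T i' j)) :
    Nat.card {M // IsMTIM T M} = Fintype.card (Param T) := by
  rw [← Nat.card_eq_fintype_card]
  refine (Nat.card_eq_of_bijective (fun p => ⟨p.toFinset, p.isMTIM_toFinset hdisj⟩)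
    ⟨?_, ?_⟩).symm
  · exact fun p q h => Param.toFinset_injective hdisj (congrArg Subtype.val h)
  · rintro ⟨M, hM⟩
    obtain ⟨p, rfl⟩ := exists_toFinset_eq hdisj hM
    exact ⟨p, rfl⟩

end IsMTIM

theorem count_MTIM_general {α : Type*} [DecidableEq α]
    (s n₀ : ℕ) (hs : 2 ≤ s)
    (T : Fin n₀ → Fin s → Finset α)
    (hdisj : ∀ j : Fin s, ∀ i i' : Fin n₀, i ≠ i' → Disjoint (T i j) (T i' j)) :
    Set.ncard {M : Finset (Fin s → α) | IsMTIM T M} =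
      (Nat.factorial n₀) ^ (s - 1) * ∏ i : Fin n₀, ∏ j : Fin s, (T i j).card := by
  obtain ⟨s, rfl⟩ : ∃ s', s = s' + 1 := ⟨s - 1, by omega⟩
  rw [← Nat.card_coe_set_eq, Nat.add_sub_cancel, ← IsMTIM.card_param]
  exact IsMTIM.card_eq_card_param hdisj

/-- **Counting MultiTree-inducing matchings.** Let `s ≥ 2`, `n₀ ≥ 1`, and for each
`j ∈ [s]` let `A_j` be partitioned into nonempty blocks `T 1 j, …, T n₀ j`. Then the
number of MultiTree-inducing matchings `M ⊆ A₁ × ⋯ × A_s` is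
`(n₀!)^(s-1) · ∏_{i,j} |T i j|`. -/
theorem count_MTIM {α : Type*} [Fintype α] [DecidableEq α]
    (s n₀ : ℕ) (hs : 2 ≤ s) (hn₀ : 1 ≤ n₀)
    (T : Fin n₀ → Fin s → Finset α)
    (hne : ∀ i j, (T i j).Nonempty)
    (hdisj : ∀ j : Fin s, ∀ i i' : Fin n₀, i ≠ i' → Disjoint (T i j) (T i' j)) :
    Set.ncard {M : Finset (Fin s → α) | IsMTIM T M} =
      (Nat.factorial n₀) ^ (s - 1) * ∏ i : Fin n₀, ∏ j : Fin s, (T i j).card :=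
  count_MTIM_general s n₀ hs T hdisj
end

section
/- Let s ≥ 2 and n_0 ≥ 1 be integers. For each j ∈ [s] let A_j be a finite set partitioned into nonempty blocks T_{1,j}, …, T_{n_0,j} with |T_{i,j}| = t_{i,j}. Let S ⊆ A_1 × ⋯ × A_s be a set with |S| = k that is contained in at least one MultiTree-inducing matching. Then the number of MultiTree-inducing matchings M with S ⊆ M equals ((n_0 − k)!)^{s-1} · ∏ t_{i,j}, where the product runs over all pairs (i, j) ∈ [n_0] × [s] such that no element of S has its j-th coordinate in T_{i,j}. -/
/-!
Fix a matching `M₀ ⊇ S`. A matching containing `S` is `S` together with a matching `N` of the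
blocks that `S` leaves free, and there are `m = n₀ - k` free blocks at every coordinate. List the
elements of `N` by the free block they meet at one fixed coordinate `j₀`. Then the `j₀`-th
coordinates can be chosen independently in their blocks, while at any other coordinate `j` the
list of `j`-th coordinates is an arbitrary transversal of the `m` free blocks, i.e. a bijection to
them (`m!` ways) followed by a choice inside each block.
-/

section

open Finset Function
open scoped Nat

variable {α ι κ : Type*}

section Transversal

variable {B : ι → Finset α} {J : Finset ι} {g : κ → α}

theorem Pairwise.eq_of_mem (hB : Pairwise (Disjoint on B)) {a : α} {i i' : ι}
    (hi : a ∈ B i) (hi' : a ∈ B i') : i = i' :=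
  hB.eq (Finset.not_disjoint_iff.2 ⟨a, hi, hi'⟩)

def IsTransversal (B : ι → Finset α) (J : Finset ι) (g : κ → α) : Prop :=
  (∀ k, ∃ i ∈ J, g k ∈ B i) ∧ ∀ i ∈ J, ∃! k, g k ∈ B i

theorem isTransversal_iff_exists_equiv (hB : Pairwise (Disjoint on B)) :
    IsTransversal B J g ↔ ∃ σ : κ ≃ J, ∀ k, g k ∈ B (σ k) := by
  constructor
  · rintro ⟨hcover, huniq⟩
    choose σ hσJ hσ using hcover
    have hbij : Bijective fun k => (⟨σ k, hσJ k⟩ : J) := by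
      refine ⟨fun k k' hkk' => ?_, fun i => ?_⟩
      · obtain ⟨_, -, hk⟩ := huniq (σ k) (hσJ k)
        have hk' : g k' ∈ B (σ k) := by
          rw [show σ k = σ k' from Subtype.ext_iff.1 hkk']
          exact hσ k'
        exact (hk k (hσ k)).trans (hk k' hk').symm
      · obtain ⟨k, hk, -⟩ := huniq i i.2
        exact ⟨k, Subtype.ext (hB.eq_of_mem (hσ k) hk)⟩
    exact ⟨Equiv.ofBijective _ hbij, hσ⟩
  · rintro ⟨σ, hσ⟩
    refine ⟨fun k => ⟨σ k, (σ k).2, hσ k⟩, fun i hi => ⟨σ.symm ⟨i, hi⟩, ?_, fun k hk => ?_⟩⟩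
    · simpa using hσ (σ.symm ⟨i, hi⟩)
    · rw [Equiv.eq_symm_apply]
      exact Subtype.ext (hB.eq_of_mem (hσ k) hk)

theorem card_subtype_forall_mem [Fintype κ] (B : κ → Finset α) :
    Nat.card {g : κ → α // ∀ k, g k ∈ B k} = ∏ k, #(B k) := by
  rw [Nat.card_congr Equiv.subtypePiEquivPi, Nat.card_pi]
  exact Fintype.prod_congr _ _ fun k => Nat.card_eq_finsetCard (B k)

theorem card_isTransversal [Fintype α] [Fintype κ] (hB : Pairwise (Disjoint on B)) :
    Nat.card {g : κ → α // IsTransversal B J g} = Nat.card (κ ≃ J) * ∏ i ∈ J, #(B i) := by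
  classical
  have hsplit : ({g | IsTransversal B J g} : Finset (κ → α))
      = univ.biUnion fun σ : κ ≃ J => Fintype.piFinset fun k => B (σ k) := by
    ext g
    simp [isTransversal_iff_exists_equiv hB]
  have hdisj : ((univ : Finset (κ ≃ J)) : Set (κ ≃ J)).PairwiseDisjoint
      fun σ => Fintype.piFinset fun k => B (σ k) := by
    refine fun σ _ τ _ hστ => Finset.disjoint_left.2 fun g hσ hτ => hστ ?_
    rw [Fintype.mem_piFinset] at hσ hτ
    exact Equiv.ext fun k => Subtype.ext (hB.eq_of_mem (hσ k) (hτ k))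
  have hcard (σ : κ ≃ J) : #(Fintype.piFinset fun k => B (σ k)) = ∏ i ∈ J, #(B i) := by
    rw [Fintype.card_piFinset, Equiv.prod_comp σ fun i : J => #(B i),
      prod_coe_sort J fun i => #(B i)]
  rw [Nat.card_eq_fintype_card, Fintype.card_subtype, hsplit, card_biUnion hdisj,
    sum_congr rfl fun σ _ => hcard σ, sum_const, card_univ, smul_eq_mul, Nat.card_eq_fintype_card]

end Transversal

section Matching

variable {s : ℕ} {T : ι → Fin s → Finset α} {I : Fin s → Finset ι}

def IsMatchingOn (T : ι → Fin s → Finset α) (I : Fin s → Finset ι)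
    (N : Finset (Fin s → α)) : Prop :=
  ∀ j, (∀ x ∈ N, ∃ i ∈ I j, x j ∈ T i j) ∧ ∀ i ∈ I j, ∃! x, x ∈ N ∧ x j ∈ T i j

theorem IsMatchingOn.card_eq (hT : ∀ j, Pairwise (Disjoint on fun i => T i j))
    {N : Finset (Fin s → α)} (hN : IsMatchingOn T I N) (j : Fin s) : #N = #(I j) := by
  choose x hx huniq using fun i (hi : i ∈ I j) => (hN j).2 i hi
  refine (card_bij x (fun i hi => (hx i hi).1) (fun i hi i' hi' hii' => ?_) fun y hy => ?_).symm
  · exact (hT j).eq_of_mem (hx i hi).2 (hii' ▸ (hx i' hi').2)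
  · obtain ⟨i, hi, hyi⟩ := (hN j).1 y hy
    exact ⟨i, hi, (huniq i hi y ⟨hy, hyi⟩).symm⟩

theorem existsUnique_mem_image_univ_iff {β : Type*} [DecidableEq β] [Fintype κ] {x : κ → β}
    (hx : Injective x) {P : β → Prop} : (∃! y, y ∈ univ.image x ∧ P y) ↔ ∃! k, P (x k) := by
  simp only [mem_image, mem_univ, true_and]
  constructor
  · rintro ⟨_, ⟨⟨k, rfl⟩, hk⟩, huniq⟩
    exact ⟨k, hk, fun k' hk' => hx (huniq _ ⟨⟨k', rfl⟩, hk'⟩)⟩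
  · rintro ⟨k, hk, huniq⟩
    refine ⟨x k, ⟨⟨k, rfl⟩, hk⟩, ?_⟩
    rintro _ ⟨⟨k', rfl⟩, hk'⟩
    rw [huniq k' hk']

theorem isMatchingOn_image_iff [DecidableEq α] [Fintype κ] {x : κ → Fin s → α}
    (hx : Injective x) :
    IsMatchingOn T I (univ.image x) ↔
      ∀ j, IsTransversal (fun i => T i j) (I j) fun k => x k j := by
  simp only [IsMatchingOn, IsTransversal, forall_mem_image, mem_univ, true_implies,
    existsUnique_mem_image_univ_iff hx]

/-- The condition on column `j` of an array `x : I j₀ → Fin s → α` whose row `k` is the element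
of a matching that meets block `k` at coordinate `j₀`. -/
def IsAdmissibleColumn (T : ι → Fin s → Finset α) (I : Fin s → Finset ι) (j₀ j : Fin s)
    (g : I j₀ → α) : Prop :=
  if j = j₀ then ∀ k : I j₀, g k ∈ T k j else IsTransversal (fun i => T i j) (I j) g

theorem isAdmissibleColumn_self {j₀ : Fin s} {g : I j₀ → α} :
    IsAdmissibleColumn T I j₀ j₀ g ↔ ∀ k : I j₀, g k ∈ T k j₀ := by
  rw [IsAdmissibleColumn, if_pos rfl]

theorem IsAdmissibleColumn.isTransversal (hT : ∀ j, Pairwise (Disjoint on fun i => T i j))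
    {j₀ j : Fin s} {g : I j₀ → α} (hg : IsAdmissibleColumn T I j₀ j g) :
    IsTransversal (fun i => T i j) (I j) g := by
  unfold IsAdmissibleColumn at hg
  split_ifs at hg with hj
  · subst hj
    exact (isTransversal_iff_exists_equiv (hT j)).2 ⟨Equiv.refl _, hg⟩
  · exact hg

theorem card_isMatchingOn_eq_card_admissible [DecidableEq α]
    (hT : ∀ j, Pairwise (Disjoint on fun i => T i j)) (j₀ : Fin s) :
    Nat.card {N // IsMatchingOn T I N} =
      Nat.card {x : I j₀ → Fin s → α // ∀ j, IsAdmissibleColumn T I j₀ j fun k => x k j} := by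
  have hlabel {x : I j₀ → Fin s → α} (hx : ∀ j, IsAdmissibleColumn T I j₀ j fun k => x k j)
      (k : I j₀) : x k j₀ ∈ T k j₀ :=
    isAdmissibleColumn_self.1 (hx j₀) k
  have hinj {x : I j₀ → Fin s → α} (hx : ∀ j, IsAdmissibleColumn T I j₀ j fun k => x k j) :
      Injective x := fun k k' hkk' =>
    Subtype.ext ((hT j₀).eq_of_mem (hlabel hx k) (hkk' ▸ hlabel hx k'))
  refine (Nat.card_congr (Equiv.ofBijective (fun x => ⟨univ.image x.1,
    (isMatchingOn_image_iff (hinj x.2)).2 fun j => (x.2 j).isTransversal hT⟩) ⟨?_, ?_⟩)).symm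
  · rintro ⟨x, hx⟩ ⟨y, hy⟩ hxy
    have himage : univ.image x = univ.image y := congrArg Subtype.val hxy
    refine Subtype.ext (funext fun k => ?_)
    obtain ⟨k', -, hk'⟩ := mem_image.1 (himage ▸ mem_image_of_mem x (mem_univ k))
    have hkk' : k' = k :=
      Subtype.ext ((hT j₀).eq_of_mem (hlabel hy k') (hk' ▸ hlabel hx k))
    change x k = y k
    rw [← hk', hkk']
  · rintro ⟨N, hN⟩
    choose x hx huniq using fun k : I j₀ => (hN j₀).2 k k.2
    have hxinj : Injective x := fun k k' hkk' =>
      Subtype.ext ((hT j₀).eq_of_mem (hx k).2 (hkk' ▸ (hx k').2))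
    have himage : univ.image x = N := by
      ext y
      refine ⟨fun hy => ?_, fun hy => ?_⟩
      · obtain ⟨k, -, rfl⟩ := mem_image.1 hy
        exact (hx k).1
      · obtain ⟨i, hi, hyi⟩ := (hN j₀).1 y hy
        exact mem_image.2 ⟨⟨i, hi⟩, mem_univ _, (huniq ⟨i, hi⟩ y ⟨hy, hyi⟩).symm⟩
    have hadm (j : Fin s) : IsAdmissibleColumn T I j₀ j fun k => x k j := by
      unfold IsAdmissibleColumn
      split_ifs with hj
      · subst hj
        exact fun k => (hx k).2
      · exact (isMatchingOn_image_iff hxinj).1 (himage ▸ hN) j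
    exact ⟨⟨x, hadm⟩, Subtype.ext himage⟩

theorem card_subtype_forall_column {β : Type*} [Fintype β] (P : β → (κ → α) → Prop) :
    Nat.card {x : κ → β → α // ∀ j, P j fun k => x k j} = ∏ j, Nat.card {g : κ → α // P j g} := by
  rw [← Nat.card_pi]
  exact Nat.card_congr (((Equiv.piComm _).subtypeEquiv fun _ => Iff.rfl).trans
    Equiv.subtypePiEquivPi)

theorem card_isAdmissibleColumn [Fintype α] (hT : ∀ j, Pairwise (Disjoint on fun i => T i j))
    {j₀ : Fin s} {m : ℕ} (hI : ∀ j, #(I j) = m) (j : Fin s) :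
    Nat.card {g // IsAdmissibleColumn T I j₀ j g} =
      (if j = j₀ then 1 else m !) * ∏ i ∈ I j, #(T i j) := by
  classical
  unfold IsAdmissibleColumn
  split_ifs with hj
  · subst hj
    rw [one_mul, card_subtype_forall_mem, prod_coe_sort (I j) fun i => #(T i j)]
  · have e : I j₀ ≃ I j := Fintype.equivOfCardEq (by simp [hI])
    rw [card_isTransversal (hT j), Nat.card_eq_fintype_card, Fintype.card_equiv e,
      Fintype.card_coe, hI]

theorem card_isMatchingOn [Fintype α] [DecidableEq α]
    (hT : ∀ j, Pairwise (Disjoint on fun i => T i j)) (j₀ : Fin s) {m : ℕ}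
    (hI : ∀ j, #(I j) = m) :
    Nat.card {N // IsMatchingOn T I N} = m ! ^ (s - 1) * ∏ j, ∏ i ∈ I j, #(T i j) := by
  rw [card_isMatchingOn_eq_card_admissible hT j₀, card_subtype_forall_column,
    prod_congr rfl fun j _ => card_isAdmissibleColumn hT hI j, prod_mul_distrib]
  simp [prod_ite, filter_ne', card_erase_of_mem]

end Matching

section FreeBlocks

variable [DecidableEq α] [Fintype ι] {s : ℕ} {T : ι → Fin s → Finset α}
  {S M N : Finset (Fin s → α)}

def freeBlocks (T : ι → Fin s → Finset α) (S : Finset (Fin s → α)) (j : Fin s) : Finset ι :=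
  {i | ∀ x ∈ S, x j ∉ T i j}

theorem mem_freeBlocks {j : Fin s} {i : ι} : i ∈ freeBlocks T S j ↔ ∀ x ∈ S, x j ∉ T i j := by
  simp [freeBlocks]

theorem IsMatchingOn.sdiff_freeBlocks (hM : IsMatchingOn T (fun _ => univ) M) (hSM : S ⊆ M) :
    IsMatchingOn T (freeBlocks T S) (M \ S) := by
  intro j
  obtain ⟨hcover, huniq⟩ := hM j
  refine ⟨fun x hx => ?_, fun i hi => ?_⟩
  · obtain ⟨hxM, hxS⟩ := mem_sdiff.1 hx
    obtain ⟨i, -, hxi⟩ := hcover x hxM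
    refine ⟨i, mem_freeBlocks.2 fun y hy hyi => hxS ?_, hxi⟩
    rwa [(huniq i (mem_univ i)).unique ⟨hxM, hxi⟩ ⟨hSM hy, hyi⟩]
  · obtain ⟨x, ⟨hxM, hxi⟩, hxu⟩ := huniq i (mem_univ i)
    have hxS : x ∉ S := fun hxS => mem_freeBlocks.1 hi x hxS hxi
    exact ⟨x, ⟨mem_sdiff.2 ⟨hxM, hxS⟩, hxi⟩, fun y hy => hxu y ⟨(mem_sdiff.1 hy.1).1, hy.2⟩⟩

theorem IsMatchingOn.union_of_freeBlocks (hT : ∀ j, Pairwise (Disjoint on fun i => T i j))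
    {M₀ : Finset (Fin s → α)} (hM₀ : IsMatchingOn T (fun _ => univ) M₀) (hSM₀ : S ⊆ M₀)
    (hN : IsMatchingOn T (freeBlocks T S) N) : IsMatchingOn T (fun _ => univ) (S ∪ N) := by
  intro j
  refine ⟨fun x hx => ?_, fun i _ => ?_⟩
  · rcases mem_union.1 hx with hxS | hxN
    · exact (hM₀ j).1 x (hSM₀ hxS)
    · obtain ⟨i, -, hxi⟩ := (hN j).1 x hxN
      exact ⟨i, mem_univ i, hxi⟩
  by_cases hi : i ∈ freeBlocks T S j
  · obtain ⟨x, ⟨hxN, hxi⟩, hxu⟩ := (hN j).2 i hi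
    refine ⟨x, ⟨mem_union_right S hxN, hxi⟩, fun y ⟨hy, hyi⟩ => ?_⟩
    rcases mem_union.1 hy with hyS | hyN
    · exact absurd hyi (mem_freeBlocks.1 hi y hyS)
    · exact hxu y ⟨hyN, hyi⟩
  · obtain ⟨x, hxS, hxi⟩ : ∃ x ∈ S, x j ∈ T i j := by simpa [mem_freeBlocks] using hi
    refine ⟨x, ⟨mem_union_left N hxS, hxi⟩, fun y ⟨hy, hyi⟩ => ?_⟩
    rcases mem_union.1 hy with hyS | hyN
    · exact ((hM₀ j).2 i (mem_univ i)).unique ⟨hSM₀ hyS, hyi⟩ ⟨hSM₀ hxS, hxi⟩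
    · obtain ⟨i', hi', hyi'⟩ := (hN j).1 y hyN
      exact absurd ((hT j).eq_of_mem hyi' hyi ▸ hi') hi

theorem IsMatchingOn.disjoint_of_freeBlocks (j₀ : Fin s)
    (hN : IsMatchingOn T (freeBlocks T S) N) : Disjoint S N := by
  refine disjoint_right.2 fun x hxN hxS => ?_
  obtain ⟨i, hi, hxi⟩ := (hN j₀).1 x hxN
  exact mem_freeBlocks.1 hi x hxS hxi

theorem card_isMatchingOn_superset (hT : ∀ j, Pairwise (Disjoint on fun i => T i j))
    (j₀ : Fin s) {M₀ : Finset (Fin s → α)} (hM₀ : IsMatchingOn T (fun _ => univ) M₀)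
    (hSM₀ : S ⊆ M₀) :
    Nat.card {M // IsMatchingOn T (fun _ => univ) M ∧ S ⊆ M} =
      Nat.card {N // IsMatchingOn T (freeBlocks T S) N} :=
  Nat.card_congr
    { toFun M := ⟨M.1 \ S, M.2.1.sdiff_freeBlocks M.2.2⟩
      invFun N := ⟨S ∪ N.1, IsMatchingOn.union_of_freeBlocks hT hM₀ hSM₀ N.2, subset_union_left⟩
      left_inv M := Subtype.ext (union_sdiff_of_subset M.2.2)
      right_inv N := Subtype.ext (union_sdiff_cancel_left (N.2.disjoint_of_freeBlocks j₀)) }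

end FreeBlocks

theorem isMTIM_iff_isMatchingOn_univ [DecidableEq α] {s n₀ : ℕ} {T : Fin n₀ → Fin s → Finset α}
    (hT : ∀ j, Pairwise (Disjoint on fun i => T i j)) (j₀ : Fin s) {M : Finset (Fin s → α)} :
    IsMTIM T M ↔ IsMatchingOn T (fun _ => univ) M := by
  constructor
  · rintro ⟨-, hcover, huniq⟩ j
    exact ⟨fun x hx => by simpa using hcover x hx j, fun i _ => huniq j i⟩
  · intro hM
    refine ⟨by rw [hM.card_eq hT j₀, card_univ, Fintype.card_fin], fun x hx j => ?_,
      fun j i => (hM j).2 i (mem_univ i)⟩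
    obtain ⟨i, -, hxi⟩ := (hM j).1 x hx
    exact ⟨i, hxi⟩

end

open scoped Classical in
theorem count_MTIM_containing_general {α : Type*} [Fintype α] [DecidableEq α]
    (s n₀ k : ℕ) (hs : 2 ≤ s)
    (T : Fin n₀ → Fin s → Finset α)
    (hdisj : ∀ j : Fin s, ∀ i i' : Fin n₀, i ≠ i' → Disjoint (T i j) (T i' j))
    (S : Finset (Fin s → α)) (hk : S.card = k)
    (hS : ∃ M : Finset (Fin s → α), IsMTIM T M ∧ S ⊆ M) :
    Set.ncard {M : Finset (Fin s → α) | IsMTIM T M ∧ S ⊆ M} =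
      (Nat.factorial (n₀ - k)) ^ (s - 1) *
        ∏ i : Fin n₀, ∏ j : Fin s,
          (if ∀ x ∈ S, x j ∉ T i j then (T i j).card else 1) := by
  have hT (j : Fin s) : Pairwise fun i i' => Disjoint (T i j) (T i' j) := hdisj j
  let j₀ : Fin s := ⟨0, by omega⟩
  obtain ⟨M₀, hM₀, hSM₀⟩ := hS
  have hM₀card : M₀.card = n₀ := hM₀.1
  rw [isMTIM_iff_isMatchingOn_univ hT j₀] at hM₀
  have hfree (j : Fin s) : (freeBlocks T S j).card = n₀ - k := by
    rw [← (hM₀.sdiff_freeBlocks hSM₀).card_eq hT j, Finset.card_sdiff_of_subset hSM₀, hM₀card, hk]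
  calc Set.ncard {M | IsMTIM T M ∧ S ⊆ M}
      = Nat.card {M // IsMatchingOn T (fun _ => Finset.univ) M ∧ S ⊆ M} :=
        Nat.card_congr (Equiv.subtypeEquivRight fun M =>
          and_congr_left' (isMTIM_iff_isMatchingOn_univ hT j₀))
    _ = Nat.card {N // IsMatchingOn T (freeBlocks T S) N} :=
        card_isMatchingOn_superset hT j₀ hM₀ hSM₀
    _ = (n₀ - k).factorial ^ (s - 1) * ∏ j, ∏ i ∈ freeBlocks T S j, (T i j).card :=
        card_isMatchingOn hT j₀ hfree
    _ = _ := by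
        simp only [freeBlocks, Finset.prod_filter]
        rw [Finset.prod_comm]
        -- the two sides differ only in the `Decidable` instance of the condition
        congr!

open scoped Classical in
/-- **Counting MultiTree-inducing matchings containing a fixed set.** Let `s ≥ 2`,
`n₀ ≥ 1`, with each `A_j` partitioned into nonempty blocks `T 1 j, …, T n₀ j`. If
`S ⊆ A₁ × ⋯ × A_s` has `|S| = k` and is contained in at least one MultiTree-inducing
matching, then the number of MultiTree-inducing matchings containing `S` is
`((n₀ − k)!)^(s−1) · ∏ |T i j|`, where the product is over pairs `(i, j)` such that
no element of `S` has its `j`-th coordinate in `T i j`. -/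
theorem count_MTIM_containing {α : Type*} [Fintype α] [DecidableEq α]
    (s n₀ k : ℕ) (hs : 2 ≤ s) (hn₀ : 1 ≤ n₀)
    (T : Fin n₀ → Fin s → Finset α)
    (hne : ∀ i j, (T i j).Nonempty)
    (hdisj : ∀ j : Fin s, ∀ i i' : Fin n₀, i ≠ i' → Disjoint (T i j) (T i' j))
    (S : Finset (Fin s → α)) (hk : S.card = k)
    (hS : ∃ M : Finset (Fin s → α), IsMTIM T M ∧ S ⊆ M) :
    Set.ncard {M : Finset (Fin s → α) | IsMTIM T M ∧ S ⊆ M} =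
      (Nat.factorial (n₀ - k)) ^ (s - 1) *
        ∏ i : Fin n₀, ∏ j : Fin s,
          (if ∀ x ∈ S, x j ∉ T i j then (T i j).card else 1) :=
  count_MTIM_containing_general s n₀ k hs T hdisj S hk hS
end

section
/- Let s ≥ 2 and n_0 ≥ 1 be integers. For each j ∈ [s] let A_j be a finite set partitioned into nonempty blocks T_{1,j}, …, T_{n_0,j}, and let H denote the family of all MultiTree-inducing matchings M ⊆ A_1 × ⋯ × A_s. Then H is (n_0/3)^{s-1}-spread: for every nonempty set S ⊆ A_1 × ⋯ × A_s, the number of M ∈ H with S ⊆ M is at most |H| / (n_0/3)^{|S|(s-1)}. -/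
/-!
An MTIM is determined by the value it takes in each block together with its *pairing*: the
permutations of `Fin n₀` saying which block at coordinate `j` is matched with block `i` at
coordinate `0`. Let `k = |S|`; if some MTIM contains `S`, the elements of `S` lie in distinct
blocks at every coordinate. Re-pair an MTIM `M ⊇ S` by permutations sending, at each coordinate
`j ≠ 0`, the blocks of `S` to the image of an arbitrary injection `S ↪ Fin n₀`. This is injective
in the pair (`M`, injections), as the injections can be read off the new pairing at the blocks of
`S`. Hence `|{M ⊇ S}| · (n₀)_k ^ (s-1) ≤ |H|`, and
`(n₀)_k = k! · C(n₀, k) ≥ (k/e)^k · (n₀/k)^k ≥ (n₀/3)^k`.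
-/

open Finset Function
open scoped Nat

theorem Nat.factorial_mul_pow_le_descFactorial_mul_pow {n k : ℕ} (h : k ≤ n) :
    k ! * n ^ k ≤ n.descFactorial k * k ^ k := by
  have hpow (m : ℕ) : m ^ k = ∏ _i ∈ range k, m := by simp
  rw [← Nat.descFactorial_self, Nat.descFactorial_eq_prod_range, Nat.descFactorial_eq_prod_range,
    hpow n, hpow k, ← prod_mul_distrib, ← prod_mul_distrib]
  refine prod_le_prod' fun i hi => ?_
  have hik : i < k := mem_range.mp hi
  zify [hik.le, hik.le.trans h]
  nlinarith

theorem Real.pow_le_three_pow_mul_factorial (k : ℕ) : (k : ℝ) ^ k ≤ 3 ^ k * k ! := by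
  have hexp : (k : ℝ) ^ k / k ! ≤ 3 ^ k :=
    calc (k : ℝ) ^ k / k ! ≤ Real.exp k := Real.pow_div_factorial_le_exp _ k.cast_nonneg k
      _ = Real.exp 1 ^ k := by rw [← Real.exp_nat_mul, mul_one]
      _ ≤ 3 ^ k := pow_le_pow_left₀ (Real.exp_pos 1).le Real.exp_one_lt_three.le k
  rwa [div_le_iff₀ (by positivity)] at hexp

theorem Nat.div_three_pow_le_descFactorial {n k : ℕ} (h : k ≤ n) :
    ((n : ℝ) / 3) ^ k ≤ n.descFactorial k := by
  have hk : (0 : ℝ) < (k : ℝ) ^ k := by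
    rcases k.eq_zero_or_pos with rfl | hk
    · simp
    · positivity
  refine le_of_mul_le_mul_right ?_ hk
  calc ((n : ℝ) / 3) ^ k * (k : ℝ) ^ k = (n : ℝ) ^ k * (k : ℝ) ^ k / 3 ^ k := by
        rw [div_pow]; ring
    _ ≤ (n : ℝ) ^ k * k ! := by
      rw [div_le_iff₀ (by positivity), mul_assoc, mul_comm (k ! : ℝ)]
      gcongr
      exact Real.pow_le_three_pow_mul_factorial k
    _ ≤ n.descFactorial k * (k : ℝ) ^ k := by
      rw [mul_comm]; exact_mod_cast Nat.factorial_mul_pow_le_descFactorial_mul_pow h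

section MultiTreeMatching

variable {α : Type*} {s n : ℕ} {T : Fin n → Fin s → Finset α}

variable (T) in
noncomputable def blockIndex [Nonempty (Fin n)] (j : Fin s) (a : α) : Fin n :=
  Classical.epsilon fun i => a ∈ T i j

theorem mem_blockIndex [Nonempty (Fin n)] {j : Fin s} {a : α} {i : Fin n} (h : a ∈ T i j) :
    a ∈ T (blockIndex T j a) j :=
  Classical.epsilon_spec (p := fun i => a ∈ T i j) ⟨i, h⟩

theorem block_eq_of_mem (hT : ∀ j, Pairwise (Disjoint on fun i => T i j)) {j : Fin s}
    {a : α} {i i' : Fin n} (h : a ∈ T i j) (h' : a ∈ T i' j) : i = i' :=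
  (hT j).eq fun hdisj => disjoint_left.mp hdisj h h'

theorem blockIndex_eq [Nonempty (Fin n)] (hT : ∀ j, Pairwise (Disjoint on fun i => T i j))
    {j : Fin s} {a : α} {i : Fin n} (h : a ∈ T i j) : blockIndex T j a = i :=
  block_eq_of_mem hT (mem_blockIndex h) h

variable [DecidableEq α]

namespace IsMTIM

variable {M : Finset (Fin s → α)}

noncomputable def member (hM : IsMTIM T M) (j : Fin s) (i : Fin n) : Fin s → α :=
  M.choose (fun x => x j ∈ T i j) (hM.2.2 j i)

theorem member_mem (hM : IsMTIM T M) (j : Fin s) (i : Fin n) : hM.member j i ∈ M :=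
  choose_mem _ _ _

theorem member_apply_mem (hM : IsMTIM T M) (j : Fin s) (i : Fin n) : hM.member j i j ∈ T i j :=
  choose_property (fun x : Fin s → α => x j ∈ T i j) _ _

theorem member_eq (hM : IsMTIM T M) {j : Fin s} {i : Fin n} {x : Fin s → α} (hx : x ∈ M)
    (hxj : x j ∈ T i j) : hM.member j i = x :=
  (hM.2.2 j i).unique ⟨hM.member_mem j i, hM.member_apply_mem j i⟩ ⟨hx, hxj⟩

variable [Nonempty (Fin n)]

theorem member_blockIndex (hM : IsMTIM T M) {x : Fin s → α} (hx : x ∈ M) (j : Fin s) :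
    hM.member j (blockIndex T j (x j)) = x :=
  let ⟨_, hi⟩ := hM.2.1 x hx j
  hM.member_eq hx (mem_blockIndex hi)

theorem eq_of_blockIndex_eq (hM : IsMTIM T M) {x y : Fin s → α} (hx : x ∈ M) (hy : y ∈ M)
    {j : Fin s} (h : blockIndex T j (x j) = blockIndex T j (y j)) : x = y := by
  rw [← hM.member_blockIndex hx j, h, hM.member_blockIndex hy j]

variable [NeZero s]

/-- `hM.pairing j i` is the block, at coordinate `j`, of the member of `M` lying in block `i` at
coordinate `0`. -/
noncomputable def pairing (hM : IsMTIM T M) (j : Fin s) (i : Fin n) : Fin n :=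
  blockIndex T j (hM.member 0 i j)

theorem pairing_zero (hT : ∀ j, Pairwise (Disjoint on fun i => T i j)) (hM : IsMTIM T M)
    (i : Fin n) : hM.pairing 0 i = i :=
  blockIndex_eq hT (hM.member_apply_mem 0 i)

theorem pairing_blockIndex (hM : IsMTIM T M) {x : Fin s → α} (hx : x ∈ M) (j : Fin s) :
    hM.pairing j (blockIndex T 0 (x 0)) = blockIndex T j (x j) := by
  rw [pairing, hM.member_blockIndex hx]

theorem pairing_bijective (hT : ∀ j, Pairwise (Disjoint on fun i => T i j)) (hM : IsMTIM T M)
    (j : Fin s) : Bijective (hM.pairing j) := by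
  refine Injective.bijective_of_finite fun i i' h => ?_
  have hii' := hM.eq_of_blockIndex_eq (hM.member_mem 0 i) (hM.member_mem 0 i') h
  exact block_eq_of_mem hT (hM.member_apply_mem 0 i) (hii' ▸ hM.member_apply_mem 0 i')

end IsMTIM

def matchingOf (v : Fin s → Fin n → α) (p : Fin s → Fin n → Fin n) :
    Finset (Fin s → α) :=
  univ.image fun i j => v j (p j i)

section matchingOf

variable {v : Fin s → Fin n → α} {p : Fin s → Fin n → Fin n}

theorem isMTIM_matchingOf [NeZero s] (hT : ∀ j, Pairwise (Disjoint on fun i => T i j))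
    (hv : ∀ j b, v j b ∈ T b j) (hp : ∀ j, Bijective (p j)) : IsMTIM T (matchingOf v p) := by
  have hinj : Injective fun i j => v j (p j i) := fun i i' h =>
    (hp 0).1 <| block_eq_of_mem hT (hv 0 (p 0 i))
      ((show v 0 (p 0 i) = v 0 (p 0 i') from congrFun h 0) ▸ hv 0 (p 0 i'))
  refine ⟨by simp [matchingOf, card_image_of_injective _ hinj], ?_, fun j b => ?_⟩
  · simp only [matchingOf, mem_image, mem_univ, true_and, forall_exists_index,
      forall_apply_eq_imp_iff]
    exact fun i j => ⟨p j i, hv j (p j i)⟩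
  · obtain ⟨i, rfl⟩ := (hp j).2 b
    refine ⟨_, ⟨mem_image_of_mem _ (mem_univ i), hv j (p j i)⟩, ?_⟩
    rintro _ ⟨hy, hyj⟩
    obtain ⟨i', -, rfl⟩ := mem_image.mp hy
    rw [(hp j).1 (block_eq_of_mem hT (hv j (p j i')) hyj)]

namespace IsMTIM

theorem member_matchingOf (h : IsMTIM T (matchingOf v p)) (hv : ∀ j b, v j b ∈ T b j)
    (j : Fin s) (i : Fin n) : h.member j (p j i) = fun j' => v j' (p j' i) :=
  h.member_eq (mem_image_of_mem _ (mem_univ i)) (hv j (p j i))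

theorem member_matchingOf_apply (h : IsMTIM T (matchingOf v p)) (hv : ∀ j b, v j b ∈ T b j)
    (hp : ∀ j, Surjective (p j)) (j : Fin s) (b : Fin n) : h.member j b j = v j b := by
  obtain ⟨i, rfl⟩ := hp j b
  rw [h.member_matchingOf hv]

variable [NeZero s] [Nonempty (Fin n)]

theorem pairing_matchingOf (hT : ∀ j, Pairwise (Disjoint on fun i => T i j))
    (h : IsMTIM T (matchingOf v p)) (hv : ∀ j b, v j b ∈ T b j) (hp₀ : ∀ i, p 0 i = i)
    (j : Fin s) (i : Fin n) : h.pairing j i = p j i := by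
  have hmember := h.member_matchingOf hv 0 i
  rw [hp₀] at hmember
  rw [pairing, hmember, blockIndex_eq hT (hv j (p j i))]

theorem matchingOf_member_pairing {M : Finset (Fin s → α)} (hM : IsMTIM T M) :
    matchingOf (fun j b => hM.member j b j) hM.pairing = M := by
  ext x
  simp only [matchingOf, mem_image, mem_univ, true_and]
  constructor
  · rintro ⟨i, rfl⟩
    convert hM.member_mem 0 i using 1
    funext j
    rw [pairing, hM.member_blockIndex (hM.member_mem 0 i)]
  · intro hx
    exact ⟨blockIndex T 0 (x 0), funext fun j => by
      rw [hM.pairing_blockIndex hx, hM.member_blockIndex hx]⟩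

end IsMTIM

end matchingOf

namespace IsMTIM

variable [NeZero s] [Nonempty (Fin n)] {M : Finset (Fin s → α)}

noncomputable def relabel (hM : IsMTIM T M) (σ : Fin s → Equiv.Perm (Fin n)) :
    Finset (Fin s → α) :=
  matchingOf (fun j b => hM.member j b j) fun j => σ j ∘ hM.pairing j

theorem isMTIM_relabel (hT : ∀ j, Pairwise (Disjoint on fun i => T i j)) (hM : IsMTIM T M)
    (σ : Fin s → Equiv.Perm (Fin n)) : IsMTIM T (hM.relabel σ) :=
  isMTIM_matchingOf hT (fun j b => hM.member_apply_mem j b) fun j =>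
    (σ j).bijective.comp (hM.pairing_bijective hT j)

theorem pairing_of_eq_relabel (hT : ∀ j, Pairwise (Disjoint on fun i => T i j))
    (hM : IsMTIM T M) {σ : Fin s → Equiv.Perm (Fin n)} (hσ : σ 0 = 1)
    {N : Finset (Fin s → α)} (hN : IsMTIM T N) (h : N = hM.relabel σ) (j : Fin s) (i : Fin n) :
    hN.pairing j i = σ j (hM.pairing j i) := by
  subst h
  refine hN.pairing_matchingOf hT (fun j b => hM.member_apply_mem j b) (fun i => ?_) j i
  simp [hσ, hM.pairing_zero hT]

theorem member_apply_of_eq_relabel (hT : ∀ j, Pairwise (Disjoint on fun i => T i j))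
    (hM : IsMTIM T M) (σ : Fin s → Equiv.Perm (Fin n)) {N : Finset (Fin s → α)}
    (hN : IsMTIM T N) (h : N = hM.relabel σ) (j : Fin s) (b : Fin n) :
    hN.member j b j = hM.member j b j := by
  subst h
  exact hN.member_matchingOf_apply (fun j b => hM.member_apply_mem j b)
    (fun j => ((σ j).bijective.comp (hM.pairing_bijective hT j)).2) j b

theorem eq_of_relabel_eq (hT : ∀ j, Pairwise (Disjoint on fun i => T i j))
    {M₁ M₂ : Finset (Fin s → α)} (hM₁ : IsMTIM T M₁) (hM₂ : IsMTIM T M₂)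
    {σ : Fin s → Equiv.Perm (Fin n)} (hσ : σ 0 = 1) (h : hM₁.relabel σ = hM₂.relabel σ) :
    M₁ = M₂ := by
  have hN := isMTIM_relabel hT hM₂ σ
  have hpairing : hM₁.pairing = hM₂.pairing := funext₂ fun j i => (σ j).injective <| by
    rw [← pairing_of_eq_relabel hT hM₁ hσ hN h.symm,
      ← pairing_of_eq_relabel hT hM₂ hσ hN rfl]
  have hvalue : (fun j b => hM₁.member j b j) = fun j b => hM₂.member j b j :=
    funext₂ fun j b => by
      rw [← member_apply_of_eq_relabel hT hM₁ σ hN h.symm,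
        member_apply_of_eq_relabel hT hM₂ σ hN rfl]
  rw [← hM₁.matchingOf_member_pairing, ← hM₂.matchingOf_member_pairing, hvalue, hpairing]

end IsMTIM

open IsMTIM in
theorem ncard_mul_descFactorial_pow_le [Fintype α] [NeZero s] [Nonempty (Fin n)]
    (hT : ∀ j, Pairwise (Disjoint on fun i => T i j)) {S M₀ : Finset (Fin s → α)}
    (hM₀ : IsMTIM T M₀) (hS : S ⊆ M₀) :
    {M | IsMTIM T M ∧ S ⊆ M}.ncard * n.descFactorial S.card ^ (s - 1) ≤
      {M | IsMTIM T M}.ncard := by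
  let u (j : Fin s) : S ↪ Fin n := ⟨fun x => blockIndex T j (x.1 j), fun x y h =>
    Subtype.ext (hM₀.eq_of_blockIndex_eq (hS x.2) (hS y.2) h)⟩
  let τ (ι : {j : Fin s // j ≠ 0} → (S ↪ Fin n)) (j : Fin s) : Equiv.Perm (Fin n) :=
    if h : j = 0 then 1 else (Equiv.Perm.exists_smul_eq_embedding (u j) (ι ⟨j, h⟩)).choose
  have hτ₀ ι : τ ι 0 = 1 := dif_pos rfl
  have hτ ι (j : {j : Fin s // j ≠ 0}) x : τ ι j (u j x) = ι j x := by
    simp only [τ, dif_neg j.2]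
    exact DFunLike.congr_fun (Equiv.Perm.exists_smul_eq_embedding (u j) (ι j)).choose_spec x
  -- a relabelled matching remembers `ι`, read off at the blocks of `S`
  have hrecover {M N : Finset (Fin s → α)} (hM : IsMTIM T M) (hSM : S ⊆ M) ι
      (hN : IsMTIM T N) (h : N = hM.relabel (τ ι)) (j : {j : Fin s // j ≠ 0}) x :
      hN.pairing j (u 0 x) = ι j x := by
    rw [pairing_of_eq_relabel hT hM (hτ₀ ι) hN h, ← hτ ι j x]
    exact congrArg _ (hM.pairing_blockIndex (hSM x.2) j)
  let F (q : {M | IsMTIM T M ∧ S ⊆ M} × ({j : Fin s // j ≠ 0} → (S ↪ Fin n))) :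
      {M | IsMTIM T M} :=
    ⟨q.1.2.1.relabel (τ q.2), isMTIM_relabel hT _ _⟩
  have hF : Injective F := by
    rintro ⟨⟨M₁, hM₁, hS₁⟩, ι₁⟩ ⟨⟨M₂, hM₂, hS₂⟩, ι₂⟩ h
    have h : hM₁.relabel (τ ι₁) = hM₂.relabel (τ ι₂) := congrArg Subtype.val h
    have hN := isMTIM_relabel hT hM₂ (τ ι₂)
    obtain rfl : ι₁ = ι₂ := funext fun j => DFunLike.ext _ _ fun x => by
      rw [← hrecover hM₁ hS₁ ι₁ hN h.symm, hrecover hM₂ hS₂ ι₂ hN rfl]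
    obtain rfl := eq_of_relabel_eq hT hM₁ hM₂ (hτ₀ ι₁) h
    rfl
  simpa [Nat.card_prod, Nat.card_fun, Fintype.card_embedding_eq] using
    Nat.card_le_card_of_injective F hF

end MultiTreeMatching

theorem MTIM_spread_general {α : Type*} [Fintype α] [DecidableEq α]
    (s n₀ : ℕ) (hs : 2 ≤ s) (hn₀ : 1 ≤ n₀)
    (T : Fin n₀ → Fin s → Finset α)
    (hdisj : ∀ j : Fin s, ∀ i i' : Fin n₀, i ≠ i' → Disjoint (T i j) (T i' j))
    (S : Finset (Fin s → α)) :
    (Set.ncard {M : Finset (Fin s → α) | IsMTIM T M ∧ S ⊆ M} : ℝ) ≤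
      (Set.ncard {M : Finset (Fin s → α) | IsMTIM T M} : ℝ) /
        ((n₀ : ℝ) / 3) ^ (S.card * (s - 1)) := by
  have : NeZero s := ⟨by omega⟩
  have : NeZero n₀ := ⟨by omega⟩
  obtain hP | ⟨M₀, hM₀, hSM₀⟩ :=
    {M : Finset (Fin s → α) | IsMTIM T M ∧ S ⊆ M}.eq_empty_or_nonempty
  · rw [hP, Set.ncard_empty, Nat.cast_zero]
    positivity
  have hk : S.card ≤ n₀ := hM₀.1 ▸ card_le_card hSM₀
  rw [le_div_iff₀ (pow_pos (div_pos (Nat.cast_pos.mpr hn₀) three_pos) _), pow_mul]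
  calc _ ≤ _ * (n₀.descFactorial S.card : ℝ) ^ (s - 1) := by
        gcongr
        exact Nat.div_three_pow_le_descFactorial hk
    _ ≤ _ := by exact_mod_cast ncard_mul_descFactorial_pow_le hdisj hM₀ hSM₀

/-- **Lemma 2 (spreadness).** Let `s ≥ 2`, `n₀ ≥ 1`, with each `A_j` partitioned into
nonempty blocks `T 1 j, …, T n₀ j`, and let `H` be the family of all
MultiTree-inducing matchings. Then `H` is `(n₀/3)^(s−1)`-spread: for every
nonempty `S ⊆ A₁ × ⋯ × A_s`, the number of `M ∈ H` with `S ⊆ M` is at most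
`|H| / (n₀/3)^(|S|(s−1))`. -/
theorem MTIM_spread {α : Type*} [Fintype α] [DecidableEq α]
    (s n₀ : ℕ) (hs : 2 ≤ s) (hn₀ : 1 ≤ n₀)
    (T : Fin n₀ → Fin s → Finset α)
    (hne : ∀ i j, (T i j).Nonempty)
    (hdisj : ∀ j : Fin s, ∀ i i' : Fin n₀, i ≠ i' → Disjoint (T i j) (T i' j))
    (S : Finset (Fin s → α)) (hSne : S.Nonempty)
    (hSsub : ∀ x ∈ S, ∀ j : Fin s, ∃ i : Fin n₀, x j ∈ T i j) :
    (Set.ncard {M : Finset (Fin s → α) | IsMTIM T M ∧ S ⊆ M} : ℝ) ≤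
      (Set.ncard {M : Finset (Fin s → α) | IsMTIM T M} : ℝ) /
        ((n₀ : ℝ) / 3) ^ (S.card * (s - 1)) :=
  MTIM_spread_general s n₀ hs hn₀ T hdisj S
end

section
/- Consider the random graph process (G_m)_{m=0}^{N} on vertex set [n], N = C(n,2). Then with high probability, simultaneously for every integer m with (n/2)(log n − log log n) ≤ m ≤ (n/2)(log n + log log n) and every set S ⊆ [n] with |S| ≤ n / (log n)^3, the number of edges of G_m inside S satisfies e_m(S) ≤ 2|S|. -/
/-- The edges of the complete graph `K_n` on vertex set `Fin n`. -/
abbrev EdgeKn (n : ℕ) := {e : Sym2 (Fin n) // ¬ e.IsDiag}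

/-- An ordering of the edges of `K_n`: a bijection from `Fin (n.choose 2)` to the
edge set of `K_n`.  A uniformly random such bijection models the random graph
process `G_0 ⊂ G_1 ⊂ ⋯ ⊂ G_N` on `[n]`. -/
abbrev EOrd (n : ℕ) := Fin (n.choose 2) ≃ EdgeKn n

open scoped Classical in
/-- Probability of an event under the uniform distribution on a finite sample space. -/
noncomputable def prob {Ω : Type*} [Fintype Ω] (p : Ω → Prop) : ℝ :=
  (Finset.univ.filter fun ω => p ω).card / Fintype.card Ω

/-- The graph `G_m` of the process: the graph on `Fin n` formed by the first `m`
edges of the ordering `ω`. -/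
def graphUpTo {n : ℕ} (ω : EOrd n) (m : ℕ) : SimpleGraph (Fin n) :=
  SimpleGraph.fromEdgeSet {e | ∃ i : Fin (n.choose 2), (i : ℕ) < m ∧ (ω i).1 = e}

/-- `e_m(S)`: the number of edges of `G_m` with both endpoints in `S`. -/
noncomputable def eIn {n : ℕ} (ω : EOrd n) (m : ℕ) (S : Finset (Fin n)) : ℕ :=
  Set.ncard {i : Fin (n.choose 2) | (i : ℕ) < m ∧ ∀ v ∈ (ω i).1, v ∈ S}

/-- `m` lies in the interval `[(n/2)(log n − log log n), (n/2)(log n + log log n)]`. -/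
def mInRange (n m : ℕ) : Prop :=
  (n : ℝ) / 2 * (Real.log n - Real.log (Real.log n)) ≤ m ∧
    (m : ℝ) ≤ (n : ℝ) / 2 * (Real.log n + Real.log (Real.log n))

/-!
Since `e_m(S)` is nondecreasing in `m`, it suffices to consider the top `M` of the window, where
the edge density is `ρ = M / C(n,2) ≤ 4 log n / n`. For a fixed set `T` of `k` edges, the positions
`ω⁻¹(T)` form a uniformly random `k`-subset of the `C(n,2)` slots, so `T ⊆ G_M` with probability
`C(M,k) / C(C(n,2),k) ≤ ρ^k`. A union bound over the `(2s+1)`-subsets of the at most `s²` edges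
inside a set `S` of size `s`, and over the `C(n,s) ≤ (en/s)^s` such sets with `s ≤ n/(log n)³`,
bounds the failure probability by `∑ₛ (4e³/log n)^s · 2e/(log n)² = O(1/(log n)²)`.
-/

open Finset

section UniformProbability

variable {Ω : Type*} [Fintype Ω]

lemma prob_eq_card_div (p : Ω → Prop) [DecidablePred p] :
    prob p = #{ω | p ω} / Fintype.card Ω := by
  unfold prob
  rw [filter_congr_decidable]

lemma prob_le_one (p : Ω → Prop) : prob p ≤ 1 := by
  classical
  rw [prob_eq_card_div]
  exact div_le_one_of_le₀ (mod_cast card_le_univ _) (Nat.cast_nonneg _)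

lemma prob_mono {p q : Ω → Prop} (h : ∀ ω, p ω → q ω) : prob p ≤ prob q := by
  classical
  simp only [prob_eq_card_div]
  gcongr with ω
  exact h ω

lemma prob_exists_le_sum {ι : Type*} (t : Finset ι) (p : ι → Ω → Prop) :
    prob (fun ω => ∃ i ∈ t, p i ω) ≤ ∑ i ∈ t, prob (p i) := by
  classical
  simp only [prob_eq_card_div, ← sum_div]
  gcongr
  calc (#{ω | ∃ i ∈ t, p i ω} : ℝ) ≤ #(t.biUnion fun i => {ω | p i ω}) :=
        mod_cast card_le_card (by intro ω; simp)
    _ ≤ ∑ i ∈ t, (#{ω | p i ω} : ℝ) := mod_cast card_biUnion_le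

lemma prob_not [Nonempty Ω] (p : Ω → Prop) : prob (fun ω => ¬ p ω) = 1 - prob p := by
  classical
  simp only [prob_eq_card_div]
  rw [eq_sub_iff_add_eq, ← add_div, div_eq_one_iff_eq (by positivity), add_comm]
  exact_mod_cast card_filter_add_card_filter_not (s := univ) p

end UniformProbability

lemma Nat.descFactorial_mul_pow_le {a N : ℕ} (h : a ≤ N) :
    ∀ k : ℕ, a.descFactorial k * N ^ k ≤ a ^ k * N.descFactorial k
  | 0 => by simp
  | k + 1 => by
    have hstep : (a - k) * N ≤ a * (N - k) := by
      rw [Nat.sub_mul, Nat.mul_sub]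
      exact Nat.sub_le_sub_left (by rw [mul_comm]; exact Nat.mul_le_mul_left k h) _
    calc a.descFactorial (k + 1) * N ^ (k + 1)
        = ((a - k) * N) * (a.descFactorial k * N ^ k) := by
          rw [Nat.descFactorial_succ, pow_succ]; ring
      _ ≤ (a * (N - k)) * (a ^ k * N.descFactorial k) :=
          Nat.mul_le_mul hstep (Nat.descFactorial_mul_pow_le h k)
      _ = a ^ (k + 1) * N.descFactorial (k + 1) := by
          rw [Nat.descFactorial_succ, pow_succ]; ring

lemma Nat.choose_div_choose_le_pow {a N : ℕ} (h : a ≤ N) (k : ℕ) :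
    (a.choose k : ℝ) / N.choose k ≤ ((a : ℝ) / N) ^ k := by
  rcases (N.choose k).eq_zero_or_pos with h0 | hpos
  · rw [h0, Nat.cast_zero, div_zero]
    positivity
  have hkN : k ≤ N := not_lt.1 (Nat.choose_eq_zero_iff.not.1 hpos.ne')
  have hNk : 0 < N ^ k := by
    rcases N.eq_zero_or_pos with rfl | hN
    · simp [show k = 0 by omega]
    · exact pow_pos hN k
  have hnat : a.choose k * N ^ k ≤ a ^ k * N.choose k := by
    refine Nat.le_of_mul_le_mul_left ?_ k.factorial_pos
    have := Nat.descFactorial_mul_pow_le h k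
    rw [Nat.descFactorial_eq_factorial_mul_choose,
      Nat.descFactorial_eq_factorial_mul_choose] at this
    calc k.factorial * (a.choose k * N ^ k) = k.factorial * a.choose k * N ^ k := by ring
      _ ≤ a ^ k * (k.factorial * N.choose k) := this
      _ = k.factorial * (a ^ k * N.choose k) := by ring
  rw [div_pow, div_le_div_iff₀ (by exact_mod_cast hpos) (by exact_mod_cast hNk)]
  exact_mod_cast hnat

lemma Nat.choose_le_exp_mul_div_pow (a k : ℕ) :
    (a.choose k : ℝ) ≤ (Real.exp 1 * a / k) ^ k := by
  rcases k.eq_zero_or_pos with rfl | hk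
  · simp
  have hk' : (0 : ℝ) < k := by exact_mod_cast hk
  have hfact : (k : ℝ) ^ k ≤ Real.exp 1 ^ k * k.factorial := by
    rw [← Real.exp_nat_mul, mul_one, ← div_le_iff₀ (by positivity)]
    exact Real.pow_div_factorial_le_exp _ hk'.le k
  calc (a.choose k : ℝ) ≤ (a : ℝ) ^ k / k.factorial := Nat.choose_le_pow_div k a
    _ ≤ (Real.exp 1 * a / k) ^ k := by
      rw [div_pow, mul_pow, div_le_div_iff₀ (by positivity) (by positivity)]
      calc (a : ℝ) ^ k * k ^ k ≤ a ^ k * (Real.exp 1 ^ k * k.factorial) := by gcongr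
        _ = Real.exp 1 ^ k * a ^ k * k.factorial := by ring

section RandomBijection

variable {α β : Type*} [Fintype α] [Fintype β] [DecidableEq α] [DecidableEq β]

open scoped Pointwise in
lemma card_filter_forall_symm_mem_smul (A : Finset α) (T : Finset β) (π : Equiv.Perm β) :
    #{ω : α ≃ β | ∀ b ∈ π • T, ω.symm b ∈ A} = #{ω : α ≃ β | ∀ b ∈ T, ω.symm b ∈ A} := by
  refine card_nbij' (·.trans π.symm) (·.trans π) ?_ ?_ ?_ ?_ <;> intro ω <;>
    simp [mem_smul_finset, Equiv.Perm.smul_def, Equiv.trans_assoc]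

lemma sum_card_filter_forall_symm_mem (A : Finset α) (k : ℕ) :
    ∑ T ∈ powersetCard k (univ : Finset β), #{ω : α ≃ β | ∀ b ∈ T, ω.symm b ∈ A}
      = Fintype.card (α ≃ β) * (#A).choose k := by
  have hfiber (ω : α ≃ β) :
      {T ∈ powersetCard k (univ : Finset β) | ∀ b ∈ T, ω.symm b ∈ A}
        = powersetCard k (A.map ω.toEmbedding) := by
    ext T
    simp [mem_powersetCard, subset_iff, and_comm]
  simp only [card_filter]
  rw [sum_comm]
  simp only [← card_filter, hfiber, card_powersetCard, card_map, sum_const, card_univ,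
    smul_eq_mul]

open scoped Pointwise in
/-- The number of such `ω` depends on `T` only through `#T`, as permutations of `β` act
transitively on the `#T`-subsets, and summing it over all `#T`-subsets counts every `ω` exactly
`C(#A, #T)` times. -/
lemma prob_forall_symm_mem (h : Fintype.card α = Fintype.card β) (A : Finset α)
    (T : Finset β) :
    prob (fun ω : α ≃ β => ∀ b ∈ T, ω.symm b ∈ A)
      = ((#A).choose #T : ℝ) / (Fintype.card β).choose #T := by
  set c : Finset β → ℕ := fun T' => #{ω : α ≃ β | ∀ b ∈ T', ω.symm b ∈ A}
  have hsymm : ∀ T' ∈ powersetCard #T (univ : Finset β), c T' = c T := by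
    intro T' hT'
    obtain ⟨π, hπ⟩ := (Set.powersetCard.isPretransitive (α := β) (n := #T)).exists_smul_eq
      ⟨T, rfl⟩ ⟨T', (mem_powersetCard.1 hT').2⟩
    have hT'π : T' = π • T := by
      simpa using (congrArg Subtype.val hπ).symm
    rw [hT'π]
    exact card_filter_forall_symm_mem_smul A T π
  have hsum := sum_card_filter_forall_symm_mem (β := β) A #T
  rw [sum_congr rfl hsymm, sum_const, card_powersetCard, card_univ, smul_eq_mul] at hsum
  obtain ⟨e⟩ := Fintype.card_eq.1 h
  have hN : Fintype.card (α ≃ β) ≠ 0 := by rw [Fintype.card_equiv e]; positivity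
  have hk : (Fintype.card β).choose #T ≠ 0 :=
    (Nat.choose_pos (card_le_univ T)).ne'
  rw [prob_eq_card_div, eq_div_iff (by exact_mod_cast hk), div_mul_eq_mul_div,
    div_eq_iff (by exact_mod_cast hN)]
  exact_mod_cast (mul_comm _ _).trans (hsum.trans (mul_comm _ _))

lemma prob_forall_symm_mem_le (h : Fintype.card α = Fintype.card β) (A : Finset α)
    (T : Finset β) :
    prob (fun ω : α ≃ β => ∀ b ∈ T, ω.symm b ∈ A) ≤ ((#A : ℝ) / Fintype.card α) ^ #T := by
  rw [prob_forall_symm_mem h, h]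
  exact Nat.choose_div_choose_le_pow (h ▸ card_le_univ A) _

lemma prob_le_card_filter_symm_mem (h : Fintype.card α = Fintype.card β) (A : Finset α)
    (F : Finset β) (k : ℕ) :
    prob (fun ω : α ≃ β => k ≤ #{b ∈ F | ω.symm b ∈ A})
      ≤ (#F).choose k * ((#A : ℝ) / Fintype.card α) ^ k := by
  calc prob (fun ω : α ≃ β => k ≤ #{b ∈ F | ω.symm b ∈ A})
      ≤ prob (fun ω : α ≃ β => ∃ T ∈ F.powersetCard k, ∀ b ∈ T, ω.symm b ∈ A) := by
        refine prob_mono fun ω hω => ?_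
        obtain ⟨T, hT, rfl⟩ := exists_subset_card_eq hω
        refine ⟨T, mem_powersetCard.2 ⟨hT.trans (filter_subset _ _), rfl⟩, fun b hb => ?_⟩
        exact (mem_filter.1 (hT hb)).2
    _ ≤ ∑ T ∈ F.powersetCard k, prob (fun ω : α ≃ β => ∀ b ∈ T, ω.symm b ∈ A) :=
        prob_exists_le_sum _ _
    _ ≤ ∑ T ∈ F.powersetCard k, ((#A : ℝ) / Fintype.card α) ^ k := by
        refine sum_le_sum fun T hT => ?_
        rw [← (mem_powersetCard.1 hT).2]
        exact prob_forall_symm_mem_le h A T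
    _ = (#F).choose k * ((#A : ℝ) / Fintype.card α) ^ k := by
        rw [sum_const, card_powersetCard, nsmul_eq_mul]

end RandomBijection

section GraphProcess

variable {n : ℕ}

def edgesWithin (S : Finset (Fin n)) : Finset (EdgeKn n) := {e | ∀ v ∈ e.1, v ∈ S}

lemma card_edgesWithin_le (S : Finset (Fin n)) : #(edgesWithin S) ≤ #S ^ 2 :=
  calc #(edgesWithin S) = #((edgesWithin S).map (Function.Embedding.subtype _)) :=
        (card_map _).symm
    _ ≤ #S.sym2 := card_le_card fun e he => by
        obtain ⟨e, he, rfl⟩ := mem_map.1 he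
        exact mem_sym2_iff.2 (by simp_all [edgesWithin])
    _ ≤ #(S ×ˢ S) := by rw [sym2_eq_image]; exact card_image_le
    _ = #S ^ 2 := by rw [card_product, sq]

lemma card_edgeKn : Fintype.card (EdgeKn n) = n.choose 2 := by
  simpa using Sym2.card_subtype_not_diag (α := Fin n)

lemma eIn_eq_card_filter (ω : EOrd n) (m : ℕ) (S : Finset (Fin n)) :
    eIn ω m S =
      #{e ∈ edgesWithin S | ω.symm e ∈ ({i : Fin (n.choose 2) | (i : ℕ) < m} : Finset _)} := by
  rw [eIn, Set.ncard_eq_toFinset_card', Set.toFinset_ofPred]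
  refine card_equiv ω fun i => ?_
  simp [edgesWithin, and_comm]

lemma eIn_mono (ω : EOrd n) {m m' : ℕ} (h : m ≤ m') (S : Finset (Fin n)) :
    eIn ω m S ≤ eIn ω m' S :=
  Set.ncard_le_ncard (fun _ hi => ⟨hi.1.trans_le h, hi.2⟩) (Set.toFinite _)

lemma prob_two_mul_card_lt_eIn_le (m : ℕ) (S : Finset (Fin n)) :
    prob (fun ω : EOrd n => 2 * #S < eIn ω m S)
      ≤ (Real.exp 1 * #S / 2 * (m / n.choose 2)) ^ (2 * #S + 1) := by
  set k := 2 * #S + 1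
  have hcard : Fintype.card (Fin (n.choose 2)) = Fintype.card (EdgeKn n) := by
    rw [Fintype.card_fin, card_edgeKn]
  have htail := prob_le_card_filter_symm_mem hcard
    ({i : Fin (n.choose 2) | (i : ℕ) < m} : Finset _) (edgesWithin S) k
  simp only [← eIn_eq_card_filter, Fin.card_filter_val_lt, Fintype.card_fin] at htail
  have hchoose : ((#(edgesWithin S)).choose k : ℝ) ≤ (Real.exp 1 * #S / 2) ^ k :=
    calc ((#(edgesWithin S)).choose k : ℝ) ≤ ((#S ^ 2).choose k : ℝ) :=
          mod_cast Nat.choose_le_choose k (card_edgesWithin_le S)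
      _ ≤ (Real.exp 1 * (#S ^ 2 : ℕ) / k) ^ k := Nat.choose_le_exp_mul_div_pow _ _
      _ ≤ (Real.exp 1 * #S / 2) ^ k := by
          refine pow_le_pow_left₀ (by positivity) ?_ k
          rw [div_le_div_iff₀ (by positivity) (by norm_num)]
          push_cast [k]
          nlinarith [mul_nonneg (Real.exp_pos 1).le (Nat.cast_nonneg (α := ℝ) #S)]
  have hmin : ((min (n.choose 2) m : ℕ) : ℝ) / n.choose 2 ≤ m / n.choose 2 := by
    gcongr
    exact_mod_cast min_le_right _ _
  calc _ ≤ _ := htail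
    _ ≤ (Real.exp 1 * #S / 2) ^ k * ((m : ℝ) / n.choose 2) ^ k := by gcongr
    _ = _ := (mul_pow _ _ _).symm

end GraphProcess

lemma choose_mul_pow_le_half_pow {n s : ℕ} {L ρ : ℝ} (hL : 8 * Real.exp 1 ^ 3 ≤ L)
    (hρ0 : 0 ≤ ρ) (hρ : ρ ≤ 4 * L / n) (hs : s * L ^ 3 ≤ n) :
    n.choose s * (Real.exp 1 * s / 2 * ρ) ^ (2 * s + 1)
      ≤ (1 / 2) ^ s * (2 * Real.exp 1 / L ^ 2) := by
  set e := Real.exp 1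
  have he : 0 < e := Real.exp_pos 1
  have hLpos : 0 < L := lt_of_lt_of_le (by positivity) hL
  rcases s.eq_zero_or_pos with rfl | hs0
  · norm_num
    positivity
  have hs0' : (1 : ℝ) ≤ s := by exact_mod_cast hs0
  have hn : 0 < (n : ℝ) := lt_of_lt_of_le (by positivity) hs
  set t := s * L / n with ht_def
  have htpos : 0 < t := by positivity
  have ht : t ≤ 1 / L ^ 2 := by
    rw [ht_def, div_le_div_iff₀ hn (by positivity)]
    linarith
  have hbase : e * s / 2 * ρ ≤ 2 * e * t := by
    calc e * s / 2 * ρ ≤ e * s / 2 * (4 * L / n) := by gcongr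
      _ = 2 * e * t := by rw [ht_def]; ring
  have hchoose : (n.choose s : ℝ) ≤ (e * L / t) ^ s := by
    have : e * L / t = e * n / s := by rw [ht_def]; field_simp
    rw [this]
    exact Nat.choose_le_exp_mul_div_pow n s
  calc (n.choose s : ℝ) * (e * s / 2 * ρ) ^ (2 * s + 1)
      ≤ (e * L / t) ^ s * (2 * e * t) ^ (2 * s + 1) := by gcongr
    _ = (4 * e ^ 3 * (L * t)) ^ s * (2 * e * t) := by
        rw [pow_succ, pow_mul, ← mul_assoc, ← mul_pow]
        congr 2
        field_simp
        ring
    _ ≤ (1 / 2) ^ s * (2 * e / L ^ 2) := by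
        gcongr
        · calc 4 * e ^ 3 * (L * t) ≤ 4 * e ^ 3 * (L * (1 / L ^ 2)) := by gcongr
            _ = 4 * e ^ 3 / L := by field_simp
            _ ≤ 1 / 2 := by rw [div_le_iff₀ hLpos]; linarith
        · calc 2 * e * t ≤ 2 * e * (1 / L ^ 2) := by gcongr
            _ = 2 * e / L ^ 2 := by ring

lemma prob_exists_small_set_two_mul_card_lt_eIn_le {n : ℕ} (m : ℕ) {L : ℝ}
    (hL : 8 * Real.exp 1 ^ 3 ≤ L) (hm : (m : ℝ) / n.choose 2 ≤ 4 * L / n) :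
    prob (fun ω : EOrd n =>
        ∃ S ∈ ({S | (#S : ℝ) ≤ n / L ^ 3} : Finset (Finset (Fin n))), 2 * #S < eIn ω m S)
      ≤ 4 * Real.exp 1 / L ^ 2 := by
  set g : ℕ → ℝ := fun s => (Real.exp 1 * s / 2 * (m / n.choose 2)) ^ (2 * s + 1)
  set small : ℕ → Prop := fun s => (s : ℝ) ≤ n / L ^ 3
  have hLpos : 0 < L := lt_of_lt_of_le (by positivity) hL
  have hterm : ∀ s, n.choose s • (if small s then g s else 0)
      ≤ (1 / 2) ^ s * (2 * Real.exp 1 / L ^ 2) := by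
    intro s
    split_ifs with hs
    · rw [nsmul_eq_mul]
      exact choose_mul_pow_le_half_pow hL (by positivity) hm
        ((le_div_iff₀ (by positivity)).1 hs)
    · rw [smul_zero]
      positivity
  calc _ ≤ ∑ S ∈ ({S | small #S} : Finset (Finset (Fin n))),
          prob (fun ω : EOrd n => 2 * #S < eIn ω m S) := prob_exists_le_sum _ _
    _ ≤ ∑ S ∈ ({S | small #S} : Finset (Finset (Fin n))), g #S :=
        sum_le_sum fun S _ => prob_two_mul_card_lt_eIn_le m S
    _ = ∑ s ∈ range (n + 1), n.choose s • (if small s then g s else 0) := by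
        rw [sum_filter, ← powerset_univ,
          sum_powerset_apply_card (fun s => if small s then g s else 0), card_univ,
          Fintype.card_fin]
    _ ≤ ∑ s ∈ range (n + 1), (1 / 2 : ℝ) ^ s * (2 * Real.exp 1 / L ^ 2) :=
        sum_le_sum fun s _ => hterm s
    _ ≤ 2 * (2 * Real.exp 1 / L ^ 2) := by
        rw [← sum_mul]
        gcongr
        exact sum_geometric_two_le _
    _ = 4 * Real.exp 1 / L ^ 2 := by ring

lemma div_choose_two_le_four_mul_div {n m : ℕ} (hn : 2 ≤ n) {L : ℝ} (hL : 0 ≤ L)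
    (hm : (m : ℝ) ≤ n / 2 * (L + Real.log L)) :
    (m : ℝ) / n.choose 2 ≤ 4 * L / n := by
  have hnR : (2 : ℝ) ≤ n := by exact_mod_cast hn
  have hm' : (m : ℝ) ≤ n * L := by nlinarith [Real.log_le_self hL]
  have hN : (n : ℝ) ^ 2 / 4 ≤ n.choose 2 := by
    rw [Nat.cast_choose_two]
    nlinarith
  calc (m : ℝ) / n.choose 2 ≤ (n * L) / ((n : ℝ) ^ 2 / 4) := by gcongr
    _ = 4 * L / n := by field_simp

lemma one_sub_le_prob_edge_density_small_sets {n : ℕ} (hn : 2 ≤ n)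
    (hL : 8 * Real.exp 1 ^ 3 ≤ Real.log n) :
    1 - 4 * Real.exp 1 / Real.log n ^ 2 ≤
      prob (fun ω : EOrd n => ∀ m : ℕ, mInRange n m → ∀ S : Finset (Fin n),
        (#S : ℝ) ≤ n / Real.log n ^ 3 → (eIn ω m S : ℝ) ≤ 2 * #S) := by
  set L := Real.log n
  have hL1 : 1 ≤ L := by
    have : 1 ≤ Real.exp 1 ^ 3 := one_le_pow₀ (Real.one_le_exp zero_le_one)
    linarith
  set M := ⌊(n : ℝ) / 2 * (L + Real.log L)⌋₊
  have hM : (M : ℝ) / n.choose 2 ≤ 4 * L / n :=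
    div_choose_two_le_four_mul_div hn (by linarith)
      (Nat.floor_le (by have := Real.log_nonneg hL1; positivity))
  have hbad := prob_exists_small_set_two_mul_card_lt_eIn_le M hL hM
  have : Nonempty (EOrd n) := ⟨Fintype.equivOfCardEq (by rw [Fintype.card_fin, card_edgeKn])⟩
  calc 1 - 4 * Real.exp 1 / L ^ 2
      ≤ prob (fun ω : EOrd n =>
          ¬ ∃ S ∈ ({S | (#S : ℝ) ≤ n / L ^ 3} : Finset (Finset (Fin n))), 2 * #S < eIn ω M S) := by
        rw [prob_not]; linarith
    _ ≤ _ := by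
      refine prob_mono fun ω hω m hm S hS => ?_
      have hmM : m ≤ M := Nat.le_floor hm.2
      have : eIn ω M S ≤ 2 * #S := not_lt.1 fun h => hω ⟨S, by simpa using hS, h⟩
      exact_mod_cast (eIn_mono ω hmM S).trans this

/-- **Lemma 3(b).** W.h.p., simultaneously for all `m` in the connectivity window and
all `S ⊆ [n]` with `|S| ≤ n/(log n)³`, the number of edges of `G_m` inside `S` is at
most `2|S|`. -/
theorem edge_density_small_sets :
    Filter.Tendsto
      (fun n : ℕ =>
        prob (Ω := EOrd n) (fun ω =>
          ∀ m : ℕ, mInRange n m →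
            ∀ S : Finset (Fin n),
              (S.card : ℝ) ≤ (n : ℝ) / (Real.log n) ^ 3 →
                (eIn ω m S : ℝ) ≤ 2 * S.card))
      Filter.atTop (nhds 1) := by
  have hlog : Filter.Tendsto (fun n : ℕ => Real.log n) Filter.atTop Filter.atTop :=
    Real.tendsto_log_atTop.comp tendsto_natCast_atTop_atTop
  have hlower : Filter.Tendsto (fun n : ℕ => 1 - 4 * Real.exp 1 / Real.log n ^ 2)
      Filter.atTop (nhds 1) := by
    simpa using tendsto_const_nhds.sub
      (tendsto_const_nhds.div_atTop ((Filter.tendsto_pow_atTop two_ne_zero).comp hlog))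
  refine tendsto_of_tendsto_of_tendsto_of_le_of_le' hlower tendsto_const_nhds ?_
    (Filter.Eventually.of_forall fun n => prob_le_one _)
  filter_upwards [Filter.eventually_ge_atTop 2, hlog.eventually_ge_atTop (8 * Real.exp 1 ^ 3)]
    with n hn hL
  exact one_sub_le_prob_edge_density_small_sets hn hL
end
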